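/- Let P ⊆ ℝ^d be a reflexive polytope and v a lattice point on the boundary of P. Then the star set st(v) equals the set of points x ∈ P such that x + λv ∉ P for all λ > 0; the projected polytope P_v := π_v(P) is a lattice polytope with respect to the quotient lattice ℤ^d/ℤv containing the origin in its interior; and the projection π_v restricts to a bijection from st(v) ∩ ℤ^d onto P_v ∩ (ℤ^d/ℤv). -/

import Mathlib

open scoped BigOperators

noncomputable section

/-- The standard dot product on `ℝ^d`. -/
def dotProd {d : ℕ} (x y : Fin d → ℝ) : ℝ := ∑ i, x i * y i

/-- A point of `ℝ^d` is a lattice point (element of `ℤ^d`) if all coordinates are integers. -/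
def IsLatticePoint {d : ℕ} (x : Fin d → ℝ) : Prop := ∀ i, ∃ n : ℤ, x i = (n : ℝ)

/-- A lattice polytope is the convex hull of finitely many lattice points. -/
def IsLatticePolytope {d : ℕ} (P : Set (Fin d → ℝ)) : Prop :=
  ∃ V : Finset (Fin d → ℝ), (∀ v ∈ V, IsLatticePoint v) ∧ P = convexHull ℝ (V : Set (Fin d → ℝ))

/-- The dual polytope `P* = {y | ⟨x,y⟩ ≥ -1 ∀ x ∈ P}`. -/
def dualPolytope {d : ℕ} (P : Set (Fin d → ℝ)) : Set (Fin d → ℝ) :=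
  {y | ∀ x ∈ P, -1 ≤ dotProd x y}

/-- A reflexive polytope: a full-dimensional lattice polytope with `0` in its interior whose
dual polytope is again a lattice polytope. -/
def IsReflexive {d : ℕ} (P : Set (Fin d → ℝ)) : Prop :=
  IsLatticePolytope P ∧ (0 : Fin d → ℝ) ∈ interior P ∧ IsLatticePolytope (dualPolytope P)

/-- A face of `P`: the subset of `P` where some linear functional attains its maximum bound. -/
def IsFace {d : ℕ} (P F : Set (Fin d → ℝ)) : Prop :=
  ∃ (u : Fin d → ℝ) (c : ℝ), (∀ x ∈ P, dotProd u x ≤ c) ∧ F = {x ∈ P | dotProd u x = c}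

/-- A facet of a `d`-dimensional polytope: a nonempty face of dimension `d - 1`. -/
def IsFacet {d : ℕ} (P F : Set (Fin d → ℝ)) : Prop :=
  IsFace P F ∧ F.Nonempty ∧ Module.finrank ℝ (vectorSpan ℝ F) = d - 1

/-- `x ∼ y` : `x` and `y` lie in a common facet of `P`. -/
def SameFacet {d : ℕ} (P : Set (Fin d → ℝ)) (x y : Fin d → ℝ) : Prop :=
  ∃ F, IsFacet P F ∧ x ∈ F ∧ y ∈ F

/-- The star set of `x`: the union of all facets of `P` containing `x`. -/
def starSet {d : ℕ} (P : Set (Fin d → ℝ)) (x : Fin d → ℝ) : Set (Fin d → ℝ) :=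
  {y | SameFacet P x y}

/-- A family of lattice points forming a `ℤ`-basis of the lattice `ℤ^d`. -/
def IsZBasisFamily {d n : ℕ} (s : Fin n → (Fin d → ℝ)) : Prop :=
  LinearIndependent ℝ s ∧ (∀ i, IsLatticePoint (s i)) ∧
    ∀ z : Fin d → ℝ, IsLatticePoint z → ∃ c : Fin n → ℤ, z = ∑ i, (c i : ℝ) • s i

/-- A primitive lattice point: a nonzero lattice point such that no lattice point lies
strictly between `0` and it. -/
def IsPrimitivePoint {d : ℕ} (x : Fin d → ℝ) : Prop :=
  IsLatticePoint x ∧ x ≠ 0 ∧ ∀ y ∈ openSegment ℝ (0 : Fin d → ℝ) x, ¬ IsLatticePoint y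

/-- A Fano polytope: a full-dimensional lattice polytope with `0` in its interior all of whose
vertices are primitive lattice points. -/
def IsFanoPolytope {d : ℕ} (P : Set (Fin d → ℝ)) : Prop :=
  IsLatticePolytope P ∧ (0 : Fin d → ℝ) ∈ interior P ∧
    ∀ v ∈ Set.extremePoints ℝ P, IsPrimitivePoint v

/-- Canonical: the only interior lattice point is the origin. -/
def IsCanonicalPolytope {d : ℕ} (P : Set (Fin d → ℝ)) : Prop :=
  {x ∈ interior P | IsLatticePoint x} = {0}

/-- Terminal: the only lattice points of `P` are the origin and the vertices. -/
def IsTerminalPolytope {d : ℕ} (P : Set (Fin d → ℝ)) : Prop :=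
  {x ∈ P | IsLatticePoint x} = insert (0 : Fin d → ℝ) (Set.extremePoints ℝ P)

/-- Simplicial: every facet has exactly `d` vertices. -/
def IsSimplicial {d : ℕ} (P : Set (Fin d → ℝ)) : Prop :=
  ∀ F, IsFacet P F → (Set.extremePoints ℝ F).ncard = d

/-- Smooth: the vertices of every facet form a `ℤ`-basis of the lattice. -/
def IsSmoothPolytope {d : ℕ} (P : Set (Fin d → ℝ)) : Prop :=
  ∀ F, IsFacet P F → ∃ s : Fin d → (Fin d → ℝ),
    Set.extremePoints ℝ F = Set.range s ∧ IsZBasisFamily s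

/-- Semi-terminal: any two distinct vertices in a common facet are joined by a lattice-point
free segment. -/
def IsSemiTerminal {d : ℕ} (P : Set (Fin d → ℝ)) : Prop :=
  ∀ v ∈ Set.extremePoints ℝ P, ∀ w ∈ Set.extremePoints ℝ P, v ≠ w → SameFacet P v w →
    {x ∈ segment ℝ v w | IsLatticePoint x} = {v, w}

/-- The quotient space `ℝ^d / ℝv`. -/
abbrev QuotSpace {d : ℕ} (v : Fin d → ℝ) := (Fin d → ℝ) ⧸ (Submodule.span ℝ {v})

/-- The canonical projection `π_v : ℝ^d → ℝ^d/ℝv`. -/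
def projAlong {d : ℕ} (v : Fin d → ℝ) : (Fin d → ℝ) →ₗ[ℝ] QuotSpace v :=
  (Submodule.span ℝ {v}).mkQ

/-- The quotient lattice `ℤ^d/ℤv`, regarded as the image of `ℤ^d` in `ℝ^d/ℝv`. -/
def quotLattice {d : ℕ} (v : Fin d → ℝ) : Set (QuotSpace v) :=
  projAlong v '' {x | IsLatticePoint x}

/-- A primitive point of the quotient lattice `ℤ^d/ℤv`. -/
def QuotPrimitive {d : ℕ} (v : Fin d → ℝ) (q : QuotSpace v) : Prop :=
  q ∈ quotLattice v ∧ q ≠ 0 ∧ ∀ t ∈ openSegment ℝ (0 : QuotSpace v) q, t ∉ quotLattice v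

/-- A Fano polytope in the quotient space `ℝ^d/ℝv` with respect to the lattice `ℤ^d/ℤv`. -/
def QuotIsFanoPolytope {d : ℕ} (v : Fin d → ℝ) (Q : Set (QuotSpace v)) : Prop :=
  (∃ V : Finset (QuotSpace v), (∀ q ∈ V, q ∈ quotLattice v) ∧
      Q = convexHull ℝ (V : Set (QuotSpace v))) ∧
  (0 : QuotSpace v) ∈ interior Q ∧
  ∀ q ∈ Set.extremePoints ℝ Q, QuotPrimitive v q

/-- Unimodular equivalence: a real linear isomorphism mapping lattice onto lattice and one
polytope onto the other. -/
def LatticeEquivTo {d e : ℕ} (P : Set (Fin d → ℝ)) (Q : Set (Fin e → ℝ)) : Prop :=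
  ∃ f : (Fin d → ℝ) ≃ₗ[ℝ] (Fin e → ℝ),
    (∀ x, IsLatticePoint x ↔ IsLatticePoint (f x)) ∧ f '' P = Q

/-- The hexagon `Z₂ = conv(±(1,0), ±(0,1), ±(1,1)) ⊆ ℝ²`. -/
def Z2 : Set (Fin 2 → ℝ) :=
  convexHull ℝ ({![1,0], ![0,1], ![1,1], ![-1,0], ![0,-1], ![-1,-1]} : Set (Fin 2 → ℝ))

/-- The `j`-th coordinate pair of a point of `ℝ^{2m}`. -/
def pairCoords {m : ℕ} (x : Fin (2 * m) → ℝ) (j : Fin m) : Fin 2 → ℝ :=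
  fun i => x ⟨2 * (j : ℕ) + (i : ℕ), by have := j.isLt; have := i.isLt; omega⟩

/-- The `m`-fold product `Z₂ × ⋯ × Z₂ ⊆ ℝ^{2m}`. -/
def prodZ2 (m : ℕ) : Set (Fin (2 * m) → ℝ) := {x | ∀ j : Fin m, pairCoords x j ∈ Z2}

/-- The `j`-th coordinate pair of a point of `ℝ^{2m+1}` (first `2m` coordinates). -/
def pairCoords' {m : ℕ} (x : Fin (2 * m + 1) → ℝ) (j : Fin m) : Fin 2 → ℝ :=
  fun i => x ⟨2 * (j : ℕ) + (i : ℕ), by have := j.isLt; have := i.isLt; omega⟩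

/-- The product `[-1,1] × Z₂ × ⋯ × Z₂ ⊆ ℝ^{2m+1}` with `m` hexagon factors. -/
def boxProdZ2 (m : ℕ) : Set (Fin (2 * m + 1) → ℝ) :=
  {x | x ⟨2 * m, by omega⟩ ∈ Set.Icc (-1 : ℝ) 1 ∧ ∀ j : Fin m, pairCoords' x j ∈ Z2}

/-! Write the reflexive polytope as `P = {x | -1 ≤ ⟪u, x⟫ for all u ∈ W}`, where `W` is the
finite set of lattice vertices of `P*`. From `x ∈ P` one cannot move in direction `v` exactly when
some `u ∈ W` is tight at both `x` and `v`: a constraint tight at `x` but not at `v` has an integral,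
hence nonnegative, value at `v`. A common tight constraint yields a facet through `x` and `v`, cut
out by an extreme point of the dual face tight at their midpoint. For the bijection, the last point
`z + s • v` of `P` on the line through a lattice point `z` has such a tight `u ∈ W`, and
`-1 = ⟪u, z⟫ - s` forces `s ∈ ℤ`. -/

open Filter Topology

variable {d : ℕ}

theorem dotProd_eq_dotProduct (x y : Fin d → ℝ) : dotProd x y = x ⬝ᵥ y := rfl

theorem isLinearMap_dotProduct_left (u : Fin d → ℝ) : IsLinearMap ℝ (· ⬝ᵥ u) :=
  ⟨fun x y => add_dotProduct x y u, fun c x => smul_dotProduct c x u⟩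

theorem exists_dotProduct_eq_of_linearMap (f : (Fin d → ℝ) →ₗ[ℝ] ℝ) :
    ∃ w : Fin d → ℝ, ∀ x, f x = w ⬝ᵥ x :=
  ⟨_, fun x => (LinearMap.congr_fun ((dotProductEquiv ℝ (Fin d)).apply_symm_apply f) x).symm⟩

theorem IsLatticePoint.exists_dotProduct_eq_intCast {x y : Fin d → ℝ} (hx : IsLatticePoint x)
    (hy : IsLatticePoint y) : ∃ n : ℤ, x ⬝ᵥ y = n := by
  choose a ha using hx
  choose b hb using hy
  exact ⟨∑ i, a i * b i, by simp [dotProduct, ha, hb]⟩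

theorem IsLatticePoint.add_intCast_smul {x v : Fin d → ℝ} (hx : IsLatticePoint x)
    (hv : IsLatticePoint v) (n : ℤ) : IsLatticePoint (x + (n : ℝ) • v) := by
  intro i
  obtain ⟨a, ha⟩ := hx i
  obtain ⟨b, hb⟩ := hv i
  exact ⟨a + n * b, by simp [ha, hb]⟩

theorem dualPolytope_convexHull (V : Set (Fin d → ℝ)) :
    dualPolytope (convexHull ℝ V) = {u | ∀ a ∈ V, -1 ≤ a ⬝ᵥ u} := by
  ext u
  refine ⟨fun hu a ha => hu a (subset_convexHull ℝ V ha), fun hu => ?_⟩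
  exact convexHull_min hu (convex_halfSpace_ge (isLinearMap_dotProduct_left u) (-1))

theorem mem_of_forall_mem_dualPolytope {P : Set (Fin d → ℝ)} (hconv : Convex ℝ P)
    (hclosed : IsClosed P) (h0 : 0 ∈ P) {x : Fin d → ℝ}
    (hx : ∀ u ∈ dualPolytope P, -1 ≤ x ⬝ᵥ u) : x ∈ P := by
  by_contra hxP
  obtain ⟨f, c, hfP, hfx⟩ := geometric_hahn_banach_closed_point hconv hclosed hxP
  have hc : 0 < c := by simpa using hfP 0 h0
  obtain ⟨w, hw⟩ := exists_dotProduct_eq_of_linearMap f.toLinearMap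
  have hdot : ∀ y, y ⬝ᵥ (-c⁻¹ • w) = -(f y / c) := fun y => by
    rw [dotProduct_smul, dotProduct_comm, ← f.coe_coe, hw, smul_eq_mul]
    ring
  have hdual : -c⁻¹ • w ∈ dualPolytope P := fun y hy => by
    rw [dotProd_eq_dotProduct, hdot, neg_le_neg_iff, div_le_one hc]
    exact (hfP y hy).le
  have := hx _ hdual
  rw [hdot, neg_le_neg_iff, div_le_one hc] at this
  exact hfx.not_ge this

theorem eq_setOf_of_dualPolytope_eq_convexHull {P W : Set (Fin d → ℝ)} (hconv : Convex ℝ P)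
    (hclosed : IsClosed P) (h0 : 0 ∈ P) (hW : dualPolytope P = convexHull ℝ W) :
    P = {x | ∀ u ∈ W, -1 ≤ u ⬝ᵥ x} := by
  ext x
  refine ⟨fun hx u hu => ?_, fun hx => mem_of_forall_mem_dualPolytope hconv hclosed h0 ?_⟩
  · rw [dotProduct_comm]
    exact (hW ▸ subset_convexHull ℝ W hu : u ∈ dualPolytope P) x hx
  · rw [hW]
    intro u hu
    rw [dotProduct_comm]
    exact convexHull_min hx (convex_halfSpace_ge (isLinearMap_dotProduct_left x) (-1)) hu

theorem eventually_forall_le_dotProduct_add_smul {S : Finset (Fin d → ℝ)} {x y : Fin d → ℝ}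
    {r : ℝ} (hx : ∀ a ∈ S, r ≤ a ⬝ᵥ x) (hy : ∀ a ∈ S, a ⬝ᵥ x = r → 0 ≤ a ⬝ᵥ y) :
    ∀ᶠ t in 𝓝[≥] (0 : ℝ), ∀ a ∈ S, r ≤ a ⬝ᵥ (x + t • y) := by
  rw [eventually_all_finset]
  intro a ha
  simp only [dotProduct_add, dotProduct_smul, smul_eq_mul]
  rcases (hx a ha).eq_or_lt with htight | hslack
  · filter_upwards [self_mem_nhdsWithin] with t (ht : 0 ≤ t)
    nlinarith [hy a ha htight.symm]
  · have hcont : Continuous fun t : ℝ => a ⬝ᵥ x + t * a ⬝ᵥ y := by fun_prop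
    have hnear : ∀ᶠ t in 𝓝 (0 : ℝ), r < a ⬝ᵥ x + t * a ⬝ᵥ y :=
      (hcont.tendsto 0).eventually_const_lt (by simpa using hslack)
    exact (hnear.filter_mono nhdsWithin_le_nhds).mono fun _ => le_of_lt

theorem exists_dotProduct_eq_neg_one_of_forall_add_smul_notMem {P : Set (Fin d → ℝ)}
    {W : Finset (Fin d → ℝ)} (hPW : P = {x | ∀ u ∈ W, -1 ≤ u ⬝ᵥ x})
    (hWlat : ∀ u ∈ W, IsLatticePoint u) {x v : Fin d → ℝ} (hx : x ∈ P) (hv : v ∈ P)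
    (hvL : IsLatticePoint v) (hmax : ∀ l : ℝ, 0 < l → x + l • v ∉ P) :
    ∃ u ∈ W, u ⬝ᵥ x = -1 ∧ u ⬝ᵥ v = -1 := by
  by_contra! hnone
  rw [hPW] at hx hv hmax
  have hnonneg : ∀ u ∈ W, u ⬝ᵥ x = -1 → 0 ≤ u ⬝ᵥ v := fun u hu hux => by
    obtain ⟨n, hn⟩ := (hWlat u hu).exists_dotProduct_eq_intCast hvL
    have hle : (-1 : ℤ) ≤ n := by exact_mod_cast hn ▸ hv u hu
    have hne : n ≠ -1 := fun h => hnone u hu hux (by rw [hn, h]; norm_num)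
    rw [hn]
    exact_mod_cast (by omega : (0 : ℤ) ≤ n)
  obtain ⟨l, hlP, hl⟩ := ((eventually_forall_le_dotProduct_add_smul hx hnonneg).filter_mono
    (nhdsWithin_mono _ Set.Ioi_subset_Ici_self)).and self_mem_nhdsWithin |>.exists
  exact hmax l hl hlP

theorem exists_mem_extremePoints_dualPolytope_dotProduct_eq {P W : Set (Fin d → ℝ)}
    (hW : dualPolytope P = convexHull ℝ W) (hWfin : W.Finite) {m u₀ : Fin d → ℝ} (hm : m ∈ P)
    (hu₀ : u₀ ∈ dualPolytope P) (htight : m ⬝ᵥ u₀ = -1) :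
    ∃ u ∈ (dualPolytope P).extremePoints ℝ, m ⬝ᵥ u = -1 := by
  -- the dual points tight at `m` form the face of the dual exposed by `-⟪m, ·⟫`
  set l : StrongDual ℝ (Fin d → ℝ) :=
    -LinearMap.toContinuousLinearMap (dotProductEquiv ℝ (Fin d) m)
  have hl : ∀ u, l u = -(m ⬝ᵥ u) := fun _ => rfl
  have hexposed : IsExposed ℝ (dualPolytope P) (l.toExposed (dualPolytope P)) :=
    ContinuousLinearMap.toExposed.isExposed
  have hcompact : IsCompact (dualPolytope P) := hW ▸ hWfin.isCompact_convexHull (𝕜 := ℝ)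
  have hu₀l : u₀ ∈ l.toExposed (dualPolytope P) :=
    ⟨hu₀, fun y hy => by rw [hl, hl, htight, neg_le_neg_iff]; exact hy m hm⟩
  obtain ⟨u, hu⟩ := (hexposed.isCompact hcompact).extremePoints_nonempty ⟨u₀, hu₀l⟩
  refine ⟨u, hexposed.isExtreme.extremePoints_subset_extremePoints hu, ?_⟩
  have hle := hu.1.2 u₀ hu₀
  rw [hl, hl, htight] at hle
  exact le_antisymm (by linarith) (hu.1.1 m hm)

def dualFace (P : Set (Fin d → ℝ)) (u : Fin d → ℝ) : Set (Fin d → ℝ) := {x ∈ P | x ⬝ᵥ u = -1}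

theorem isFace_dualFace {P : Set (Fin d → ℝ)} {u : Fin d → ℝ} (hu : u ∈ dualPolytope P) :
    IsFace P (dualFace P u) := by
  refine ⟨-u, 1, fun x hx => ?_, ?_⟩
  · rw [dotProd_eq_dotProduct, neg_dotProduct, dotProduct_comm, neg_le]
    exact hu x hx
  · ext x
    simp only [dualFace, dotProd_eq_dotProduct, neg_dotProduct, neg_eq_iff_eq_neg,
      Set.mem_ofPred_eq, dotProduct_comm u x]

theorem finrank_vectorSpan_add_one_of_subset_hyperplane {K E : Type*} [Field K]
    [AddCommGroup E] [Module K E] [FiniteDimensional K E] {F : Set E} (f : E →ₗ[K] K) {c : K}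
    (hc : c ≠ 0) (hF : ∀ x ∈ F, f x = c) {m : E} (hm : m ∈ F)
    (hspan : Submodule.span K F = ⊤) :
    Module.finrank K (vectorSpan K F) + 1 = Module.finrank K E := by
  have hker : vectorSpan K F ≤ LinearMap.ker f := by
    rw [vectorSpan_def, Submodule.span_le]
    rintro _ ⟨x, hx, y, hy, rfl⟩
    simp [hF x hx, hF y hy]
  have hker_ne_top : LinearMap.ker f ≠ ⊤ := fun h =>
    hc (hF m hm ▸ LinearMap.mem_ker.1 (h ▸ Submodule.mem_top : m ∈ LinearMap.ker f))
  have hlt : Module.finrank K (vectorSpan K F) < Module.finrank K E :=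
    (Submodule.finrank_mono hker).trans_lt (Submodule.finrank_lt hker_ne_top)
  have htop : ⊤ ≤ vectorSpan K F ⊔ K ∙ m := by
    rw [← hspan, Submodule.span_le]
    intro x hx
    rw [← sub_add_cancel x m]
    exact Submodule.add_mem_sup (vsub_mem_vectorSpan K hx hm) (Submodule.mem_span_singleton_self m)
  have hge : Module.finrank K E ≤ Module.finrank K (vectorSpan K F) + 1 := calc
    Module.finrank K E = Module.finrank K (⊤ : Submodule K E) := (finrank_top K E).symm
    _ ≤ Module.finrank K ↥(vectorSpan K F ⊔ K ∙ m) := Submodule.finrank_mono htop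
    _ ≤ Module.finrank K (vectorSpan K F) + Module.finrank K (K ∙ m) :=
      Submodule.finrank_add_le_finrank_add_finrank _ _
    _ ≤ Module.finrank K (vectorSpan K F) + 1 := by
      gcongr
      simpa using finrank_span_le_card ({m} : Set E)
  omega

theorem span_dualFace_eq_top {P : Set (Fin d → ℝ)} {V : Finset (Fin d → ℝ)}
    (hPV : P = convexHull ℝ ↑V) {u : Fin d → ℝ} (hu : u ∈ (dualPolytope P).extremePoints ℝ) :
    Submodule.span ℝ (dualFace P u) = ⊤ := by
  subst hPV
  by_contra hne
  obtain ⟨f, hf0, hker⟩ := Submodule.exists_le_ker_of_lt_top _ (lt_top_iff_ne_top.2 hne)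
  obtain ⟨w, hw⟩ := exists_dotProduct_eq_of_linearMap f
  have hw0 : w ≠ 0 := by rintro rfl; exact hf0 (LinearMap.ext fun x => by simp [hw])
  -- `u ± t • w` stay dual for small `t`: the vertices tight at `u` are orthogonal to `w`
  have hperturb : ∀ y ∈ ({w, -w} : Set (Fin d → ℝ)),
      ∀ᶠ t in 𝓝[≥] (0 : ℝ), ∀ a ∈ V, -1 ≤ a ⬝ᵥ (u + t • y) := by
    intro y hy
    refine eventually_forall_le_dotProduct_add_smul (fun a ha => hu.1 a
      (subset_convexHull ℝ _ ha)) fun a ha hau => ?_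
    have haw : a ⬝ᵥ w = 0 := by
      rw [dotProduct_comm, ← hw]
      exact hker (Submodule.subset_span ⟨subset_convexHull ℝ _ ha, hau⟩)
    rcases hy with rfl | rfl <;> simp [haw]
  obtain ⟨t, ⟨hplus, hminus⟩, ht⟩ := ((hperturb w (by simp)).and (hperturb (-w) (by simp))
    |>.filter_mono (nhdsWithin_mono _ Set.Ioi_subset_Ici_self)).and self_mem_nhdsWithin |>.exists
  rw [dualPolytope_convexHull] at hu
  have hmid : u ∈ openSegment ℝ (u + t • w) (u + t • -w) :=
    ⟨1 / 2, 1 / 2, by norm_num, by norm_num, by norm_num, by module⟩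
  have heq : u + t • w = u := hu.2 hplus hminus hmid
  exact hw0 ((smul_eq_zero.1 (add_eq_left.1 heq)).resolve_left (ne_of_gt ht))

theorem isFacet_dualFace {P : Set (Fin d → ℝ)} {V : Finset (Fin d → ℝ)}
    (hPV : P = convexHull ℝ ↑V) {u : Fin d → ℝ} (hu : u ∈ (dualPolytope P).extremePoints ℝ)
    {m : Fin d → ℝ} (hm : m ∈ dualFace P u) : IsFacet P (dualFace P u) := by
  refine ⟨isFace_dualFace hu.1, ⟨m, hm⟩, ?_⟩
  have := finrank_vectorSpan_add_one_of_subset_hyperplane (dotProductEquiv ℝ (Fin d) u)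
    (by norm_num) (fun x hx => (dotProduct_comm u x).trans hx.2) hm (span_dualFace_eq_top hPV hu)
  rw [Module.finrank_fin_fun] at this
  omega

theorem sameFacet_of_dotProduct_eq_neg_one {P : Set (Fin d → ℝ)} {V W : Finset (Fin d → ℝ)}
    (hPV : P = convexHull ℝ ↑V) (hW : dualPolytope P = convexHull ℝ ↑W) {x v u : Fin d → ℝ}
    (hx : x ∈ P) (hv : v ∈ P) (hu : u ∈ dualPolytope P) (hxu : x ⬝ᵥ u = -1)
    (hvu : v ⬝ᵥ u = -1) : SameFacet P v x := by
  have hsplit : ∀ u', ((1 / 2 : ℝ) • x + (1 / 2 : ℝ) • v) ⬝ᵥ u' =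
      (x ⬝ᵥ u' + v ⬝ᵥ u') / 2 := fun u' => by
    rw [add_dotProduct, smul_dotProduct, smul_dotProduct, smul_eq_mul, smul_eq_mul]
    ring
  have hm : (1 / 2 : ℝ) • x + (1 / 2 : ℝ) • v ∈ P :=
    hPV ▸ convex_convexHull ℝ _ (hPV ▸ hx) (hPV ▸ hv) (by norm_num) (by norm_num) (by norm_num)
  obtain ⟨u', hu', hmu'⟩ := exists_mem_extremePoints_dualPolytope_dotProduct_eq hW
    W.finite_toSet hm hu (by rw [hsplit, hxu, hvu]; norm_num)
  have hxu' : -1 ≤ x ⬝ᵥ u' := hu'.1 x hx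
  have hvu' : -1 ≤ v ⬝ᵥ u' := hu'.1 v hv
  rw [hsplit] at hmu'
  exact ⟨_, isFacet_dualFace hPV hu' (m := x) ⟨hx, by linarith⟩, ⟨hv, by linarith⟩,
    ⟨hx, by linarith⟩⟩

theorem vectorSpan_eq_top_of_mem_interior {E : Type*} [NormedAddCommGroup E] [NormedSpace ℝ E]
    {P : Set E} {x : E} (hx : x ∈ interior P) : vectorSpan ℝ P = ⊤ := by
  refine top_unique (le_of_eq_of_le ?_ (vectorSpan_mono ℝ interior_subset))
  rw [← direction_affineSpan, isOpen_interior.affineSpan_eq_top ⟨x, hx⟩,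
    AffineSubspace.direction_top]

theorem add_smul_notMem_of_mem_starSet {P : Set (Fin d → ℝ)} (h0 : (0 : Fin d → ℝ) ∈ interior P)
    (hd : 0 < d) {v x : Fin d → ℝ} (hx : x ∈ starSet P v) {l : ℝ} (hl : 0 < l) :
    x + l • v ∉ P := by
  obtain ⟨F, ⟨⟨u, c, hle, rfl⟩, -, hrank⟩, hvF, hxF⟩ := hx
  intro hmem
  have hc : c = 0 := by
    have h0c : u ⬝ᵥ 0 ≤ c := hle 0 (interior_subset h0)
    have hxvc : u ⬝ᵥ (x + l • v) ≤ c := hle _ hmem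
    have hux : u ⬝ᵥ x = c := hxF.2
    have huv : u ⬝ᵥ v = c := hvF.2
    rw [dotProduct_add, dotProduct_smul, hux, huv, smul_eq_mul] at hxvc
    rw [dotProduct_zero] at h0c
    nlinarith
  -- `u` is `≤ 0` on a neighbourhood of `0`, so it vanishes and the facet is all of `P`
  have hu : u = 0 := by
    have hnhds : ∀ᶠ t in 𝓝 (0 : ℝ), t • u ∈ P :=
      (continuous_id.smul continuous_const).continuousAt.preimage_mem_nhds
        (by simpa using mem_interior_iff_mem_nhds.1 h0)
    obtain ⟨t, htP, ht⟩ :=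
      ((hnhds.filter_mono nhdsWithin_le_nhds).and (self_mem_nhdsWithin (s := Set.Ioi 0))).exists
    have htu : t * (u ⬝ᵥ u) ≤ 0 := by
      simpa [dotProd_eq_dotProduct, dotProduct_smul, hc] using hle _ htP
    exact dotProduct_self_eq_zero.1 (le_antisymm (nonpos_of_mul_nonpos_right htu ht)
      (Finset.sum_nonneg fun i _ => mul_self_nonneg (u i)))
  subst hu hc
  have hFP : {x ∈ P | dotProd 0 x = 0} = P := by ext; simp [dotProd_eq_dotProduct]
  rw [hFP, vectorSpan_eq_top_of_mem_interior h0, finrank_top, Module.finrank_fin_fun] at hrank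
  omega

theorem projAlong_eq_projAlong_iff {v x y : Fin d → ℝ} :
    projAlong v x = projAlong v y ↔ ∃ t : ℝ, x = y + t • v := by
  rw [projAlong, Submodule.mkQ_apply, Submodule.mkQ_apply, Submodule.Quotient.eq,
    Submodule.mem_span_singleton]
  exact exists_congr fun t => by rw [eq_sub_iff_add_eq', eq_comm]

theorem injOn_projAlong (P : Set (Fin d → ℝ)) (v : Fin d → ℝ) :
    Set.InjOn (projAlong v) {x ∈ P | ∀ l : ℝ, 0 < l → x + l • v ∉ P} := by
  rintro x ⟨hx, hxmax⟩ y ⟨hy, hymax⟩ hxy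
  obtain ⟨t, rfl⟩ := projAlong_eq_projAlong_iff.1 hxy
  rcases lt_trichotomy t 0 with ht | rfl | ht
  · exact absurd (by simpa using hy) (hxmax (-t) (neg_pos.2 ht))
  · simp
  · exact absurd hx (hymax t ht)

theorem exists_add_smul_mem_forall_add_smul_notMem {E : Type*} [NormedAddCommGroup E]
    [NormedSpace ℝ E] {P : Set E} (hP : IsCompact P) {v : E} (hv : v ≠ 0) {z : E}
    (hz : ∃ s : ℝ, z + s • v ∈ P) :
    ∃ s : ℝ, z + s • v ∈ P ∧ ∀ l : ℝ, 0 < l → z + s • v + l • v ∉ P := by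
  have hline : IsClosedEmbedding fun s : ℝ => z + s • v :=
    (Homeomorph.addLeft z).isClosedEmbedding.comp (isClosedEmbedding_smul_left hv)
  obtain ⟨s, hs, hmax⟩ := (hline.isCompact_preimage hP).exists_isGreatest hz
  refine ⟨s, hs, fun l hl hmem => ?_⟩
  have : s + l ≤ s := hmax (show z + (s + l) • v ∈ P by rwa [add_smul, ← add_assoc])
  linarith

namespace IsReflexive

variable {P : Set (Fin d → ℝ)}

theorem isCompact (hP : IsReflexive P) : IsCompact P := by
  obtain ⟨⟨V, -, rfl⟩, -⟩ := hP
  exact V.finite_toSet.isCompact_convexHull (𝕜 := ℝ)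

theorem exists_lattice_dualPolytope_eq_convexHull (hP : IsReflexive P) :
    ∃ W : Finset (Fin d → ℝ), (∀ u ∈ W, IsLatticePoint u) ∧
      dualPolytope P = convexHull ℝ ↑W ∧ P = {x | ∀ u ∈ W, -1 ≤ u ⬝ᵥ x} := by
  obtain ⟨⟨V, -, hPV⟩, h0, ⟨W, hWlat, hW⟩⟩ := hP
  refine ⟨W, hWlat, hW, eq_setOf_of_dualPolytope_eq_convexHull ?_ ?_ (interior_subset h0) hW⟩
  · exact hPV ▸ convex_convexHull ℝ _
  · exact hPV ▸ (V.finite_toSet.isCompact_convexHull (𝕜 := ℝ)).isClosed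

theorem starSet_eq (hP : IsReflexive P) {v : Fin d → ℝ} (hv : v ∈ P) (hv0 : v ≠ 0)
    (hvL : IsLatticePoint v) : starSet P v = {x ∈ P | ∀ l : ℝ, 0 < l → x + l • v ∉ P} := by
  obtain ⟨W, hWlat, hW, hPW⟩ := hP.exists_lattice_dualPolytope_eq_convexHull
  obtain ⟨⟨V, -, hPV⟩, h0, -⟩ := hP
  have hd : 0 < d := Nat.pos_of_ne_zero (by rintro rfl; exact hv0 (Subsingleton.elim _ _))
  ext x
  constructor
  · intro hx
    obtain ⟨F, ⟨⟨u, c, -, rfl⟩, -⟩, -, hxF⟩ := id hx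
    exact ⟨hxF.1, fun l hl => add_smul_notMem_of_mem_starSet h0 hd hx hl⟩
  · rintro ⟨hx, hxmax⟩
    obtain ⟨u, huW, hux, huv⟩ :=
      exists_dotProduct_eq_neg_one_of_forall_add_smul_notMem hPW hWlat hx hv hvL hxmax
    exact sameFacet_of_dotProduct_eq_neg_one hPV hW hx hv (hW ▸ subset_convexHull ℝ _ huW)
      (by rwa [dotProduct_comm]) (by rwa [dotProduct_comm])

theorem surjOn_projAlong (hP : IsReflexive P) {v : Fin d → ℝ} (hv : v ∈ P) (hv0 : v ≠ 0)
    (hvL : IsLatticePoint v) :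
    Set.SurjOn (projAlong v) {x ∈ {x ∈ P | ∀ l : ℝ, 0 < l → x + l • v ∉ P} | IsLatticePoint x}
      {q ∈ projAlong v '' P | q ∈ quotLattice v} := by
  rintro _ ⟨⟨y, hy, rfl⟩, z, hzL, hzy⟩
  obtain ⟨W, hWlat, -, hPW⟩ := hP.exists_lattice_dualPolytope_eq_convexHull
  obtain ⟨s₀, rfl⟩ := projAlong_eq_projAlong_iff.1 hzy.symm
  obtain ⟨s, hs, hmax⟩ := exists_add_smul_mem_forall_add_smul_notMem hP.isCompact hv0 ⟨s₀, hy⟩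
  obtain ⟨u, huW, hu, huv⟩ :=
    exists_dotProduct_eq_neg_one_of_forall_add_smul_notMem hPW hWlat hs hv hvL hmax
  obtain ⟨n, hn⟩ := (hWlat u huW).exists_dotProduct_eq_intCast hzL
  have hsn : s = ((n + 1 : ℤ) : ℝ) := by
    rw [dotProduct_add, dotProduct_smul, hn, huv, smul_eq_mul] at hu
    push_cast
    linarith
  refine ⟨z + s • v, ⟨⟨hs, hmax⟩, ?_⟩, projAlong_eq_projAlong_iff.2 ⟨s - s₀, by module⟩⟩
  rw [hsn]
  exact hzL.add_intCast_smul hvL _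

end IsReflexive

/-- For a reflexive polytope `P` and a boundary lattice point `v`, the star set
of `v` equals `{x ∈ P | x + λv ∉ P for all λ > 0}`, the projection `P_v = π_v(P)` is a lattice
polytope (w.r.t. the quotient lattice `ℤ^d/ℤv`) with `0` in its interior, and `π_v` restricts
to a bijection from `st(v) ∩ ℤ^d` onto `P_v ∩ (ℤ^d/ℤv)`. -/
theorem projection_along_boundary_lattice_point {d : ℕ} (P : Set (Fin d → ℝ))
    (hP : IsReflexive P) (v : Fin d → ℝ) (hv : v ∈ frontier P) (hvL : IsLatticePoint v) :
    starSet P v = {x ∈ P | ∀ l : ℝ, 0 < l → x + l • v ∉ P} ∧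
    (∃ V : Finset (QuotSpace v), (∀ q ∈ V, q ∈ quotLattice v) ∧
      projAlong v '' P = convexHull ℝ (V : Set (QuotSpace v))) ∧
    (0 : QuotSpace v) ∈ interior (projAlong v '' P) ∧
    Set.BijOn (projAlong v) {x ∈ starSet P v | IsLatticePoint x}
      {q ∈ projAlong v '' P | q ∈ quotLattice v} := by
  classical
  have hvP : v ∈ P := hP.isCompact.isClosed.frontier_subset hv
  have hv0 : v ≠ 0 := by rintro rfl; exact hv.2 hP.2.1
  have hstar := hP.starSet_eq hvP hv0 hvL
  have hsurj := hP.surjOn_projAlong hvP hv0 hvL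
  obtain ⟨⟨V, hVlat, hPV⟩, h0, -⟩ := hP
  refine ⟨hstar, ⟨V.image (projAlong v), ?_, ?_⟩, ?_, ?_⟩
  · simp only [Finset.mem_image, forall_exists_index, and_imp, forall_apply_eq_imp_iff₂]
    exact fun a ha => ⟨a, hVlat a ha, rfl⟩
  · rw [hPV, Finset.coe_image]
    exact LinearMap.image_convexHull _ _
  · exact interior_maximal (Set.image_mono interior_subset)
      (Submodule.isOpenMap_mkQ _ _ isOpen_interior) ⟨0, h0, map_zero _⟩
  · rw [hstar]
    exact ⟨fun x hx => ⟨⟨x, hx.1.1, rfl⟩, x, hx.2, rfl⟩,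
      (injOn_projAlong P v).mono fun x hx => hx.1, hsurj⟩

end
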